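/- Let r be a positive integer and let A be an n×n real matrix which is r-diagonal (its (i,j) entry vanishes unless |i − j| < r) and such that A + Aᵀ is negative definite, and let p_1,…,p_{n−1} ≥ 0. Then the associated semidefinite program has an optimal solution M₀ with rank(M₀) ≤ r. -/

import Mathlib

open Matrix

/-- Trace inner product on square matrices: ⟨X, Y⟩ = tr(XY). -/
noncomputable def ip {m : ℕ} (X Y : Matrix (Fin m) (Fin m) ℝ) : ℝ := (X * Y).trace

/-- For an m×m matrix `A`, the symmetric matrix `A_i = e_i a_iᵀ + a_i e_iᵀ`,
whose i-th row and column equal the i-th row of `A` (with (i,i) entry `2 A i i`),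
all other entries zero. -/
noncomputable def sdpMat {m : ℕ} (A : Matrix (Fin m) (Fin m) ℝ) (i : Fin m) :
    Matrix (Fin m) (Fin m) ℝ :=
  Matrix.of fun k l => (if k = i then A i l else 0) + (if l = i then A i k else 0)

/-- Feasibility for the semidefinite program associated to an (n+1)×(n+1) matrix `A`
and data `p`: `M ⪰ 0` and `⟨A_i, M⟩ = -p_i` for every non-final index `i`. -/
def Feasible {n : ℕ} (A : Matrix (Fin (n + 1)) (Fin (n + 1)) ℝ)
    (p : Fin (n + 1) → ℝ) (M : Matrix (Fin (n + 1)) (Fin (n + 1)) ℝ) : Prop :=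
  M.PosSemidef ∧ ∀ i : Fin (n + 1), i ≠ Fin.last n → ip (sdpMat A i) M = -(p i)

/-!
With `B = -(A + Aᵀ) ≻ 0`, summing all the constraint matrices gives `∑ᵢ Aᵢ = A + Aᵀ`, so on the
feasible set the objective equals `∑_{i<n} pᵢ - tr(B M)`, and an optimal solution is a minimiser
of `tr(B M)`. It exists: a diagonal matrix is feasible because `Aᵢᵢ < 0`, and `tr(B M) ≥ ε tr M`
for some `ε > 0`, so the relevant sublevel set of the closed feasible set is compact.

Since `A` is `r`-diagonal, constraints and objective only see the band `|k - l| < r` of `M`. Every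
positive semidefinite matrix agrees on this band with the Gram matrix of vectors in `ℝʳ`: choose
the vectors one at a time, the new one having prescribed inner products with its at most `r - 1`
band neighbours. This is possible because the corresponding principal submatrix is positive
semidefinite, and `ℝʳ` leaves room for one more orthogonal direction. That Gram matrix is an
optimal solution of rank at most `r`.
-/

theorem Matrix.PosSemidef.sq_apply_le {n : Type*} {M : Matrix n n ℝ} (hM : M.PosSemidef)
    (i j : n) :    M i j ^ 2 ≤ M i i * M j j := by
  have hdet := (hM.submatrix ![i, j]).det_nonneg
  have hsymm : M j i = M i j := by simpa using congrFun (congrFun hM.isHermitian i) j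
  rw [det_fin_two] at hdet
  simp only [submatrix_apply, cons_val_zero, cons_val_one, hsymm] at hdet
  nlinarith

section PosSemidef
variable {n : Type*} [Fintype n]

theorem Matrix.PosSemidef.exists_eq_conjTranspose_mul_self [DecidableEq n] {M : Matrix n n ℝ}
    (hM : M.PosSemidef) : ∃ C : Matrix n n ℝ, M = Cᴴ * C := by
  open scoped MatrixOrder in
  exact CStarAlgebra.nonneg_iff_eq_star_mul_self.mp hM.nonneg

theorem Matrix.PosSemidef.trace_mul_nonneg [DecidableEq n] {P M : Matrix n n ℝ}
    (hP : P.PosSemidef) (hM : M.PosSemidef) : 0 ≤ (P * M).trace := by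
  obtain ⟨C, rfl⟩ := hM.exists_eq_conjTranspose_mul_self
  rw [← Matrix.mul_assoc, trace_mul_comm]
  simpa [Matrix.mul_assoc] using (hP.mul_mul_conjTranspose_same C).trace_nonneg

theorem Matrix.PosDef.exists_pos_smul_one_le [DecidableEq n] [Nonempty n] {B : Matrix n n ℝ}
    (hB : B.PosDef) : ∃ ε : ℝ, 0 < ε ∧ (B - ε • (1 : Matrix n n ℝ)).PosSemidef := by
  open scoped MatrixOrder in
  obtain ⟨ε, hε, hle⟩ := (CFC.exists_pos_algebraMap_le_iff hB.isStrictlyPositive.isSelfAdjoint).2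
    fun x hx => hB.isStrictlyPositive.spectrum_pos hx
  exact ⟨ε, hε, Matrix.le_iff.mp (by simpa [Algebra.algebraMap_eq_smul_one] using hle)⟩

theorem Matrix.PosSemidef.abs_apply_le_trace {M : Matrix n n ℝ} (hM : M.PosSemidef) (i j : n) :
    |M i j| ≤ M.trace := by
  have hdiag : ∀ k, M k k ≤ M.trace := fun k =>
    Finset.single_le_sum (f := fun l => M l l) (fun l _ => hM.diag_nonneg) (Finset.mem_univ k)
  refine abs_le_of_sq_le_sq ((hM.sq_apply_le i j).trans ?_) hM.trace_nonneg
  rw [sq]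
  exact mul_le_mul (hdiag i) (hdiag j) hM.diag_nonneg hM.trace_nonneg

theorem Matrix.isClosed_setOf_posSemidef : IsClosed {M : Matrix n n ℝ | M.PosSemidef} := by
  simp only [posSemidef_iff_dotProduct_mulVec, Set.ofPred_and, Set.ofPred_forall]
  exact (isClosed_eq continuous_id.matrix_conjTranspose continuous_id).inter
    (isClosed_iInter fun x => isClosed_le continuous_const
      (continuous_const.dotProduct (continuous_id.matrix_mulVec continuous_const)))

theorem Matrix.isCompact_setOf_posSemidef_trace_le (c : ℝ) :
    IsCompact {M : Matrix n n ℝ | M.PosSemidef ∧ M.trace ≤ c} := by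
  refine (isCompact_univ_pi fun _ => isCompact_univ_pi fun _ =>
    isCompact_Icc (a := -c) (b := c)).of_isClosed_subset ?_ ?_
  · exact isClosed_setOf_posSemidef.inter (isClosed_le continuous_id.matrix_trace continuous_const)
  · rintro M ⟨hM, hc⟩
    simp only [Set.mem_pi, Set.mem_univ, true_implies, Set.mem_Icc]
    exact fun i j => abs_le.mp ((hM.abs_apply_le_trace i j).trans hc)

theorem Matrix.PosDef.exists_isMinOn_trace_mul [DecidableEq n] [Nonempty n] {B : Matrix n n ℝ}
    (hB : B.PosDef) {F : Set (Matrix n n ℝ)} (hF : IsClosed F) (hpsd : ∀ M ∈ F, M.PosSemidef)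
    (hne : F.Nonempty) : ∃ M₁ ∈ F, IsMinOn (fun M => (B * M).trace) F M₁ := by
  obtain ⟨ε, hε, hBε⟩ := hB.exists_pos_smul_one_le
  have hcoercive : ∀ M : Matrix n n ℝ, M.PosSemidef → ε * M.trace ≤ (B * M).trace := by
    intro M hM
    have := hBε.trace_mul_nonneg hM
    rw [sub_mul, trace_sub, smul_mul_assoc, Matrix.one_mul, trace_smul, smul_eq_mul] at this
    linarith
  obtain ⟨M₀, hM₀⟩ := hne
  refine (continuous_const.matrix_mul continuous_id).matrix_trace.continuousOn.exists_isMinOn'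
    hF hM₀ (Filter.eventually_inf_principal.2 ?_)
  filter_upwards [(isCompact_setOf_posSemidef_trace_le ((B * M₀).trace / ε)).compl_mem_cocompact]
    with M hM hMF
  by_contra h
  simp only [id, not_le] at h
  refine hM ⟨hpsd M hMF, ?_⟩
  rw [le_div_iff₀ hε]
  linarith [hcoercive M (hpsd M hMF)]

end PosSemidef

section Gram
open Module Submodule
open scoped RealInnerProductSpace

variable {E : Type*} [NormedAddCommGroup E] [InnerProductSpace ℝ E]

theorem Matrix.PosSemidef.exists_eq_gram {n : Type*} [Fintype n] [DecidableEq n]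
    {G : Matrix n n ℝ} (hG : G.PosSemidef) : ∃ w : n → EuclideanSpace ℝ n, G = gram ℝ w := by
  obtain ⟨C, rfl⟩ := hG.exists_eq_conjTranspose_mul_self
  refine ⟨fun j => WithLp.toLp 2 fun k => C k j, ?_⟩
  ext i j
  simp [gram_apply, mul_apply, PiLp.inner_apply, mul_comm]

theorem Matrix.rank_gram_le [FiniteDimensional ℝ E] {n : Type*} [Fintype n] (v : n → E) :
    (gram ℝ v).rank ≤ finrank ℝ E := by
  rw [gram_eq_conjTranspose_mul (stdOrthonormalBasis ℝ E)]
  refine (rank_mul_le_left _ _).trans ((rank_le_card_width _).trans ?_)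
  simp

theorem Matrix.PosSemidef.exists_gram_option_elim_eq [FiniteDimensional ℝ E] {ι : Type*}
    [Fintype ι] [DecidableEq ι] {G : Matrix (Option ι) (Option ι) ℝ} (hG : G.PosSemidef)
    (hι : Fintype.card ι < finrank ℝ E) (u : ι → E)
    (hGu : G.submatrix some some = gram ℝ u) :
    ∃ x : E, gram ℝ (fun o => o.elim x u) = G := by
  -- Write `G` as the Gram matrix of `w` and split `w none = y + z` along the span of the
  -- `w (some i)`; copy the coefficients of `y` onto the `u i`, and replace `z` by a vector
  -- of the same length orthogonal to all `u i`, which exists since `card ι < finrank ℝ E`.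
  obtain ⟨w, rfl⟩ := hG.exists_eq_gram
  have hwu : ∀ i j, ⟪w (some i), w (some j)⟫ = ⟪u i, u j⟫ := fun i j =>
    congrFun (congrFun hGu i) j
  obtain ⟨y, hy, z, hz, hw⟩ :=
    (span ℝ (Set.range (w ∘ some))).exists_add_mem_mem_orthogonal (w none)
  obtain ⟨c, rfl⟩ := (mem_span_range_iff_exists_fun ℝ).1 hy
  have hperp : (span ℝ (Set.range u))ᗮ ≠ ⊥ := by
    rw [Ne, orthogonal_eq_bot_iff]
    intro htop
    have := finrank_range_le_card (R := ℝ) u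
    rw [Set.finrank, htop, finrank_top] at this
    omega
  have := nontrivial_iff_ne_bot.2 hperp
  obtain ⟨e, he⟩ := exists_norm_eq (span ℝ (Set.range u))ᗮ (norm_nonneg z)
  have he_perp : ∀ i, ⟪u i, e⟫ = 0 := fun i =>
    inner_right_of_mem_orthogonal (subset_span (Set.mem_range_self i)) e.2
  have hcomb : ∀ i, ⟪u i, ∑ j, c j • u j⟫ = ⟪w (some i), ∑ j, c j • w (some j)⟫ := by
    simp [inner_sum, real_inner_smul_right, hwu]
  have hz_perp : ∀ i, ⟪w (some i), z⟫ = 0 := fun i =>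
    inner_right_of_mem_orthogonal (subset_span (Set.mem_range_self i)) hz
  set y := ∑ j, c j • (w ∘ some) j
  set x := ∑ j, c j • u j + (e : E)
  have hxu : ∀ i, ⟪u i, x⟫ = ⟪w (some i), w none⟫ := by
    intro i
    rw [hw, inner_add_right, inner_add_right, he_perp, hz_perp, hcomb]
    rfl
  have hxx : ⟪x, x⟫ = ⟪w none, w none⟫ := by
    have hsum_e : ⟪∑ j, c j • u j, (e : E)⟫ = 0 := by
      simp [sum_inner, real_inner_smul_left, he_perp]
    have hsum_sum : ⟪∑ j, c j • u j, ∑ j, c j • u j⟫ = ⟪y, y⟫ := by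
      simp only [y, sum_inner, real_inner_smul_left, hcomb, Function.comp_apply]
    rw [hw, real_inner_add_add_self, real_inner_add_add_self, hsum_e, hsum_sum,
      inner_right_of_mem_orthogonal hy hz, real_inner_self_eq_norm_sq (e : E),
      real_inner_self_eq_norm_sq z, norm_coe, he]
  refine ⟨x, ?_⟩
  ext (_ | i) (_ | j)
  · exact hxx
  · exact (real_inner_comm _ _).trans ((hxu j).trans (real_inner_comm _ _))
  · exact hxu i
  · exact (hwu i j).symm

theorem Matrix.PosSemidef.exists_gram_eq_of_abs_sub_lt [FiniteDimensional ℝ E] {r : ℕ}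
    (hr : 0 < r) (hE : r ≤ finrank ℝ E) {m : ℕ} {M : Matrix (Fin m) (Fin m) ℝ}
    (hM : M.PosSemidef) :
    ∃ v : Fin m → E, ∀ k l : Fin m, |(k : ℤ) - l| < r → gram ℝ v k l = M k l := by
  induction m with
  | zero => exact ⟨Fin.elim0, fun k => k.elim0⟩
  | succ m ih =>
    obtain ⟨v, hv⟩ := ih (hM.submatrix Fin.castSucc)
    let ι := {l : Fin m // m < l + r}
    have hι : Fintype.card ι < finrank ℝ E := by
      have := Fintype.card_le_of_injective (β := Fin (r - 1))
        (fun l : ι => ⟨m - 1 - l.1, by omega⟩) fun a b h => by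
          have := Fin.val_eq_of_eq h
          exact Subtype.ext (Fin.ext (by simp at this; omega))
      simp only [Fintype.card_fin] at this
      omega
    let g : Option ι → Fin (m + 1) := fun o => o.elim (Fin.last m) fun l => l.1.castSucc
    obtain ⟨x, hx⟩ := (hM.submatrix g).exists_gram_option_elim_eq hι (fun l => v l.1) (by
      ext i j
      refine (hv i.1 j.1 ?_).symm
      have := i.2; have := j.2
      rw [abs_lt]; constructor <;> omega)
    have hg : ∀ a b, gram ℝ (Fin.snoc v x) (g a) (g b) = M (g a) (g b) := by
      intro a b
      have := congrFun (congrFun hx a) b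
      cases a <;> cases b <;> simpa [g, gram_apply] using this
    refine ⟨Fin.snoc v x, fun k l hkl => ?_⟩
    induction k using Fin.lastCases with
    | last =>
      induction l using Fin.lastCases with
      | last => exact hg none none
      | cast l => exact hg none (some ⟨l, by simp [abs_lt] at hkl; omega⟩)
    | cast k =>
      induction l using Fin.lastCases with
      | last => exact hg (some ⟨k, by simp [abs_lt] at hkl; omega⟩) none
      | cast l => simpa [gram_apply] using hv k l (by simpa using hkl)

end Gram

section SDP
variable {m : ℕ}

theorem ip_sdpMat (A M : Matrix (Fin m) (Fin m) ℝ) (i : Fin m) :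
    ip (sdpMat A i) M = ∑ l, A i l * (M l i + M i l) := by
  simp only [ip, sdpMat, trace, diag, mul_apply, of_apply, add_mul, ite_mul, zero_mul,
    Finset.sum_add_distrib, Finset.sum_ite_eq', Finset.mem_univ, if_true, mul_add]
  rw [Finset.sum_comm]
  simp only [Finset.sum_ite_eq', Finset.mem_univ, ↓reduceIte]

theorem sum_sdpMat (A : Matrix (Fin m) (Fin m) ℝ) : ∑ i, sdpMat A i = A + Aᵀ := by
  ext k l
  simp [sdpMat, Matrix.sum_apply, Finset.sum_add_distrib, Finset.sum_ite_eq]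

theorem ip_sum_left {ι : Type*} (s : Finset ι) (X : ι → Matrix (Fin m) (Fin m) ℝ)
    (M : Matrix (Fin m) (Fin m) ℝ) : ip (∑ i ∈ s, X i) M = ∑ i ∈ s, ip (X i) M := by
  simp [ip, Finset.sum_mul, trace_sum]

theorem ip_sdpMat_eq_of_eqOn_band {r : ℕ} {A M M' : Matrix (Fin m) (Fin m) ℝ}
    (hA : ∀ i j : Fin m, A i j ≠ 0 → |(i : ℤ) - (j : ℤ)| < r)
    (hMM' : ∀ k l : Fin m, |(k : ℤ) - l| < r → M k l = M' k l) (i : Fin m) :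
    ip (sdpMat A i) M = ip (sdpMat A i) M' := by
  rw [ip_sdpMat, ip_sdpMat]
  refine Finset.sum_congr rfl fun l _ => ?_
  by_cases h : A i l = 0
  · simp [h]
  · have hil := hA i l h
    rw [hMM' l i (by rwa [abs_sub_comm]), hMM' i l hil]

end SDP

section Feasible
variable {n : ℕ} {A : Matrix (Fin (n + 1)) (Fin (n + 1)) ℝ} {p : Fin (n + 1) → ℝ}

theorem isClosed_setOf_feasible : IsClosed {M | Feasible A p M} := by
  simp only [Feasible, Set.ofPred_and, Set.ofPred_forall]
  exact isClosed_setOf_posSemidef.inter (isClosed_iInter fun i => isClosed_iInter fun _ =>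
    isClosed_eq (continuous_const.matrix_mul continuous_id).matrix_trace continuous_const)

theorem feasible_diagonal (hA : ∀ i, A i i < 0) (hp : ∀ i, i ≠ Fin.last n → 0 ≤ p i) :
    Feasible A p (diagonal fun i => if i = Fin.last n then 0 else p i / (-2 * A i i)) := by
  refine ⟨PosSemidef.diagonal fun i => ?_, fun i hi => ?_⟩
  · split_ifs with hi
    · rfl
    · exact div_nonneg (hp i hi) (by linarith [hA i])
  · rw [ip_sdpMat, Finset.sum_eq_single i (fun l _ hl => by simp [hl, Ne.symm hl]) (by simp)]
    have := (hA i).ne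
    simp only [neg_mul, diagonal_apply_eq, hi, ↓reduceIte]
    field_simp
    ring

theorem Feasible.ip_sdpMat_last {M : Matrix (Fin (n + 1)) (Fin (n + 1)) ℝ}
    (hM : Feasible A p M) : ip (sdpMat A (Fin.last n)) M =
      ∑ i ∈ Finset.univ.erase (Fin.last n), p i - (-(A + Aᵀ) * M).trace := by
  have hsum := ip_sum_left Finset.univ (sdpMat A) M
  rw [sum_sdpMat, ← Finset.add_sum_erase _ _ (Finset.mem_univ (Fin.last n)),
    Finset.sum_congr rfl fun i hi => hM.2 i (Finset.ne_of_mem_erase hi)] at hsum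
  rw [Matrix.neg_mul, trace_neg, ← ip, hsum, Finset.sum_neg_distrib]
  ring

theorem Feasible.of_eqOn_band {r : ℕ}
    (hA : ∀ i j : Fin (n + 1), A i j ≠ 0 → |(i : ℤ) - (j : ℤ)| < r)
    {M M' : Matrix (Fin (n + 1)) (Fin (n + 1)) ℝ} (hM : Feasible A p M) (hM' : M'.PosSemidef)
    (hMM' : ∀ k l : Fin (n + 1), |(k : ℤ) - l| < r → M k l = M' k l) : Feasible A p M' :=
  ⟨hM', fun i hi => (ip_sdpMat_eq_of_eqOn_band hA hMM' i).symm.trans (hM.2 i hi)⟩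

end Feasible

/-- If `A` is `r`-diagonal (entries vanish unless `|i - j| < r`) and `A + Aᵀ` is negative
definite, then the associated semidefinite program has an optimal solution of rank at
most `r`. -/
theorem sdp_r_diagonal_low_rank_optimal (r n : ℕ) (hr : 0 < r)
    (A : Matrix (Fin (n + 1)) (Fin (n + 1)) ℝ)
    (hdiag : ∀ i j : Fin (n + 1), A i j ≠ 0 → |(i : ℤ) - (j : ℤ)| < r)
    (hA : (-(A + Aᵀ)).PosDef)
    (p : Fin (n + 1) → ℝ) (hp : ∀ i : Fin (n + 1), i ≠ Fin.last n → 0 ≤ p i) :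
    ∃ M₀, Feasible A p M₀ ∧ M₀.rank ≤ r ∧
      ∀ M, Feasible A p M →
        ip (sdpMat A (Fin.last n)) M ≤ ip (sdpMat A (Fin.last n)) M₀ := by
  have hAii : ∀ i, A i i < 0 := fun i => by simpa using hA.diag_pos (i := i)
  obtain ⟨M₁, hM₁, hmin⟩ := hA.exists_isMinOn_trace_mul isClosed_setOf_feasible
    (fun M hM => hM.1) ⟨_, feasible_diagonal hAii hp⟩
  obtain ⟨v, hv⟩ := hM₁.1.exists_gram_eq_of_abs_sub_lt (E := EuclideanSpace ℝ (Fin r)) hr (by simp)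
  have hband : ∀ k l : Fin (n + 1), |(k : ℤ) - l| < r → M₁ k l = gram ℝ v k l :=
    fun k l h => (hv k l h).symm
  refine ⟨gram ℝ v, hM₁.of_eqOn_band hdiag (posSemidef_gram ℝ v) hband,
    (rank_gram_le v).trans (by simp), fun M hM => ?_⟩
  rw [← ip_sdpMat_eq_of_eqOn_band hdiag hband, hM.ip_sdpMat_last, hM₁.ip_sdpMat_last]
  linarith [isMinOn_iff.1 hmin M hM]
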